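/- The largest eigenvalue μ of the Laplacian matrix of the graph G strictly exceeds max over all vertices v of G of √(m_v² + 3·m_v³/d_v). (This gives a counterexample to conjectured bound 29 of Brankov, Hansen and Stevanović.) -/

import Mathlib

/-- The edge list of the graph. -/
def edgeList : List (Fin 12 × Fin 12) :=
  [(0,3),(0,4),(0,8),(1,2),(1,3),(1,8),(1,10),(2,5),(2,7),(2,11),(3,7),(3,11),(4,6),(4,7),(5,8),(5,9),(6,9),(6,10),(7,10),(9,11),(10,11)]

/-- The graph under consideration. -/
def G : SimpleGraph (Fin 12) where
  Adj v w := (v, w) ∈ edgeList ∨ (w, v) ∈ edgeList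
  symm := ⟨fun _ _ h => h.symm⟩
  loopless := ⟨by intro v; fin_cases v <;> decide⟩

instance : DecidableRel G.Adj :=
  fun v w => inferInstanceAs (Decidable ((v, w) ∈ edgeList ∨ (w, v) ∈ edgeList))

/-- `d v` is the degree of the vertex `v`, as a real number. -/
noncomputable def d (v : Fin 12) : ℝ := G.degree v

/-- `m v` is the average of the degrees of the neighbours of `v`. -/
noncomputable def m (v : Fin 12) : ℝ :=
  (∑ u ∈ G.neighborFinset v, (G.degree u : ℝ)) / d v

/-- Integer Laplacian matrix, explicitly. -/
def LintM : Matrix (Fin 12) (Fin 12) ℤ :=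
 !![3, 0, 0, -1, -1, 0, 0, 0, -1, 0, 0, 0;
  0, 4, -1, -1, 0, 0, 0, 0, -1, 0, -1, 0;
  0, -1, 4, 0, 0, -1, 0, -1, 0, 0, 0, -1;
  -1, -1, 0, 4, 0, 0, 0, -1, 0, 0, 0, -1;
  -1, 0, 0, 0, 3, 0, -1, -1, 0, 0, 0, 0;
  0, 0, -1, 0, 0, 3, 0, 0, -1, -1, 0, 0;
  0, 0, 0, 0, -1, 0, 3, 0, 0, -1, -1, 0;
  0, 0, -1, -1, -1, 0, 0, 4, 0, 0, -1, 0;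
  -1, -1, 0, 0, 0, -1, 0, 0, 3, 0, 0, 0;
  0, 0, 0, 0, 0, -1, -1, 0, 0, 3, 0, -1;
  0, -1, 0, 0, 0, 0, -1, -1, 0, 0, 4, -1;
  0, 0, -1, -1, 0, 0, 0, 0, 0, -1, -1, 4]

lemma lapZ : G.lapMatrix ℤ = LintM := by decide

lemma lap_map {V : Type*} [Fintype V] [DecidableEq V] (H : SimpleGraph V) [DecidableRel H.Adj] :
    (H.lapMatrix ℤ).map (Int.cast : ℤ → ℝ) = H.lapMatrix ℝ := by
  ext i j
  simp [SimpleGraph.lapMatrix, SimpleGraph.degMatrix, Matrix.map_apply, Matrix.sub_apply,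
    Matrix.diagonal_apply, apply_ite (Int.cast : ℤ → ℝ)]

lemma lap_eq : G.lapMatrix ℝ = LintM.map (Int.cast) := by rw [← lap_map, lapZ]

open Matrix in
/-- Integer test vector (approximate top eigenvector). -/
def y : Fin 12 → ℤ := ![-29,-70,70,70,29,-29,-29,-70,29,29,70,-70]

open Matrix

lemma quad_val : y ⬝ᵥ (LintM *ᵥ y) = 255390 := by decide

lemma norm_val : y ⬝ᵥ y = 34446 := by decide

lemma degree_vals : ∀ v, G.degree v = [3,4,4,4,3,3,3,4,3,3,4,4].getD v.val 0 := by decide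

lemma degsum_vals : ∀ v, (∑ u ∈ G.neighborFinset v, G.degree u)
    = [10,15,15,15,10,10,10,15,10,10,15,15].getD v.val 0 := by decide

lemma bound_vals : ∀ v, m v ^ 2 + 3 * m v ^ 3 / d v ≤ 13725 / 256 := by
  intro v
  have hd := degree_vals v
  have hs := degsum_vals v
  have hm : m v = ((∑ u ∈ G.neighborFinset v, G.degree u : ℕ) : ℝ) / ((G.degree v : ℕ) : ℝ) := by
    rw [m, d, Nat.cast_sum]
  fin_cases v <;>
    (rw [hm, hs, hd, d, hd] <;> norm_num)

theorem laplacian_spectral_radius_exceeds_bound (μ : ℝ)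
    (hmem : μ ∈ spectrum ℝ (G.lapMatrix ℝ))
    (hmax : ∀ ν ∈ spectrum ℝ (G.lapMatrix ℝ), ν ≤ μ) :
    Finset.univ.sup' Finset.univ_nonempty (fun v => Real.sqrt (m v ^ 2 + 3 * m v ^ 3 / d v)) < μ := by
  classical
  set L := G.lapMatrix ℝ with hLdef
  have hL : L.IsHermitian := (G.posSemidef_lapMatrix ℝ).1
  set M : Matrix (Fin 12) (Fin 12) ℝ := algebraMap ℝ _ μ - L with hMdef
  have hM : M.IsHermitian := by
    have h1 : (algebraMap ℝ (Matrix (Fin 12) (Fin 12) ℝ) μ).IsHermitian := by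
      simp [Matrix.IsHermitian, Algebra.algebraMap_eq_smul_one]
    exact h1.sub hL
  have hMev : ∀ i, 0 ≤ hM.eigenvalues i := by
    intro i
    have h1 := hM.eigenvalues_mem_spectrum_real i
    rw [← spectrum.singleton_sub_eq] at h1
    obtain ⟨a, ha, b, hb, hab⟩ := Set.mem_sub.mp h1
    rw [Set.mem_singleton_iff] at ha
    subst ha
    rw [← hab]
    exact sub_nonneg.mpr (hmax b hb)
  have hPSD := hM.posSemidef_iff_eigenvalues_nonneg.mpr hMev
  -- the real test vector
  set xv : Fin 12 → ℝ := fun i => ((y i : ℤ) : ℝ) with hxv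
  have hkey := hPSD.dotProduct_mulVec_nonneg xv
  have hstar : star xv = xv := by
    funext i; simp [hxv]
  rw [hstar] at hkey
  have hMmul : M *ᵥ xv = μ • xv - L *ᵥ xv := by
    rw [hMdef, Matrix.sub_mulVec, Algebra.algebraMap_eq_smul_one, Matrix.smul_mulVec,
      Matrix.one_mulVec]
  rw [hMmul, dotProduct_sub, dotProduct_smul] at hkey
  have hxLx : xv ⬝ᵥ (L *ᵥ xv) = 255390 := by
    have h2 : ((y ⬝ᵥ (LintM *ᵥ y) : ℤ) : ℝ)
        = ((Int.cast : ℤ → ℝ) ∘ y) ⬝ᵥ (LintM.map Int.cast *ᵥ ((Int.cast : ℤ → ℝ) ∘ y)) := by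
      simp only [dotProduct, Matrix.mulVec, Matrix.map_apply, Function.comp_apply]
      push_cast
      rfl
    have h1 : xv = (Int.cast : ℤ → ℝ) ∘ y := rfl
    rw [hLdef, lap_eq, h1, ← h2, quad_val]
    norm_num
  have hxx : xv ⬝ᵥ xv = 34446 := by
    have h2 : ((y ⬝ᵥ y : ℤ) : ℝ) = ((Int.cast : ℤ → ℝ) ∘ y) ⬝ᵥ ((Int.cast : ℤ → ℝ) ∘ y) := by
      simp only [dotProduct, Function.comp_apply]
      push_cast
      rfl
    have h1 : xv = (Int.cast : ℤ → ℝ) ∘ y := rfl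
    rw [h1, ← h2, norm_val]
    norm_num
  rw [hxLx, hxx, smul_eq_mul] at hkey
  have hmu : (255390 : ℝ) / 34446 ≤ μ := by
    rw [div_le_iff₀ (by norm_num)]
    linarith
  have hsup : Finset.univ.sup' Finset.univ_nonempty
      (fun v => Real.sqrt (m v ^ 2 + 3 * m v ^ 3 / d v)) < (255390 : ℝ) / 34446 := by
    rw [Finset.sup'_lt_iff]
    intro v _
    have h1 := bound_vals v
    calc Real.sqrt (m v ^ 2 + 3 * m v ^ 3 / d v) ≤ Real.sqrt (13725 / 256) :=
          Real.sqrt_le_sqrt h1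
      _ < 255390 / 34446 := by
          rw [show (255390 : ℝ) / 34446 = Real.sqrt ((255390 / 34446) ^ 2) from
            (Real.sqrt_sq (by norm_num)).symm]
          apply Real.sqrt_lt_sqrt (by norm_num)
          norm_num
  exact lt_of_lt_of_le hsup hmu
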